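/- arXiv:math/0110202 — 9 statements merged into one kernel-verified Lean document; each statement's English description precedes it below -/
import Mathlib

section
/- A bounded linear projection P : X → X with P ≠ I on a real Banach space X is numerically positive if and only if ‖I - P‖ = 1. -/
open ContinuousLinearMap

/-- An operator `T` on a real normed space is numerically positive if
`x*(Tx) ≥ 0` whenever `‖x*‖² = ‖x‖² = x*(x)`. -/
def NumericallyPositive {X : Type*} [NormedAddCommGroup X] [NormedSpace ℝ X]
    (T : X →L[ℝ] X) : Prop :=
  ∀ (x : X) (g : X →L[ℝ] ℝ), ‖g‖ ^ 2 = ‖x‖ ^ 2 → g x = ‖x‖ ^ 2 → 0 ≤ g (T x)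

/-- `u` is a Flinn element: `u = 0` or there is `f` with `f u = 1` such that the
rank-one projection `f ⊗ u` is numerically positive. -/
def IsFlinn {X : Type*} [NormedAddCommGroup X] [NormedSpace ℝ X] (u : X) : Prop :=
  u = 0 ∨ ∃ f : X →L[ℝ] ℝ, f u = 1 ∧
    ∀ (x : X) (g : X →L[ℝ] ℝ), ‖g‖ ^ 2 = ‖x‖ ^ 2 → g x = ‖x‖ ^ 2 → 0 ≤ f x * g u

/-- The isometry group of `X` is almost transitive: every orbit of a unit vector
under surjective linear isometries is dense in the unit sphere. -/
def AlmostTransitive (X : Type*) [NormedAddCommGroup X] [NormedSpace ℝ X] : Prop :=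
  ∀ x ∈ Metric.sphere (0 : X) 1, ∀ y ∈ Metric.sphere (0 : X) 1,
    y ∈ closure {z : X | ∃ T : X ≃ₗᵢ[ℝ] X, T x = z}

/-- A bounded linear projection $P \ne I$ on a real Banach space is numerically
positive iff $\|I - P\| = 1$. -/
theorem stmt1 {X : Type*} [NormedAddCommGroup X] [NormedSpace ℝ X] [CompleteSpace X]
    (P : X →L[ℝ] X) (hproj : P * P = P) (hne : P ≠ 1) :
    NumericallyPositive P ↔ ‖(1 : X →L[ℝ] X) - P‖ = 1 := by
  have hPP : ∀ w : X, P (P w) = P w := fun w => by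
    have := congrArg (fun T : X →L[ℝ] X => T w) hproj; simpa using this
  constructor
  · intro hNP
    have hD : ∀ (v : X) (t : ℝ), 0 ≤ t → ‖v‖ ≤ ‖v + t • P v‖ := by
      intro v t ht
      rcases eq_or_ne v 0 with rfl | hv
      · simp
      obtain ⟨f, hf1, hfv⟩ := exists_dual_vector ℝ v (norm_ne_zero_iff.mpr hv)
      set g : X →L[ℝ] ℝ := ‖v‖ • f with hgdef
      have hgn : ‖g‖ = ‖v‖ := by
        rw [hgdef]
        exact (norm_smul ‖v‖ f).trans (by rw [hf1, mul_one, norm_norm])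
      have hg : ‖g‖ ^ 2 = ‖v‖ ^ 2 := by rw [hgn]
      have hgv : g v = ‖v‖ ^ 2 := by
        simp [hgdef, hfv]; ring
      have hpos := hNP v g hg hgv
      have h1 : ‖v‖ ^ 2 ≤ g (v + t • P v) := by
        rw [map_add, map_smul, hgv, smul_eq_mul]
        have : 0 ≤ t * g (P v) := mul_nonneg ht hpos
        linarith
      have h2 : g (v + t • P v) ≤ ‖g‖ * ‖v + t • P v‖ :=
        le_trans (le_abs_self _) (g.le_opNorm _)
      rw [hgn] at h2
      have hvpos : 0 < ‖v‖ := norm_pos_iff.mpr hv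
      nlinarith [norm_nonneg (v + t • P v)]
    have hcontr : ∀ (r : ℝ), 0 ≤ r → r < 1 → ∀ v : X, ‖v - r • P v‖ ≤ ‖v‖ := by
      intro r hr0 hr1 v
      set s : ℝ := r / (1 - r) with hsdef
      have hs : 0 ≤ s := div_nonneg hr0 (by linarith)
      have hE : (v - r • P v) + s • P (v - r • P v) = v := by
        have h1r : (1 : ℝ) - r ≠ 0 := by linarith
        have hs1r : s - s * r = r := by
          rw [hsdef]; field_simp
        rw [map_sub, map_smul, hPP, smul_sub, smul_smul, ← sub_smul, hs1r]
        abel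
      have := hD (v - r • P v) s hs
      rwa [hE] at this
    have hle1 : ∀ v : X, ‖v - P v‖ ≤ ‖v‖ := by
      intro v
      refine le_of_forall_pos_le_add ?_
      intro ε hε
      set r : ℝ := max 0 (1 - ε / (‖P v‖ + 1)) with hrdef
      have hPv1 : 0 < ‖P v‖ + 1 := by positivity
      have hr0 : 0 ≤ r := le_max_left _ _
      have hr1 : r < 1 := by
        have h : 0 < ε / (‖P v‖ + 1) := by positivity
        rw [hrdef]
        exact max_lt one_pos (by linarith)
      have hrge : 1 - ε / (‖P v‖ + 1) ≤ r := le_max_right _ _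
      have h1 : ‖v - P v‖ ≤ ‖v - r • P v‖ + ‖(r - 1) • P v‖ := by
        have h : v - P v = (v - r • P v) + (r - 1) • P v := by
          rw [sub_smul, one_smul]; abel
        rw [h]; exact norm_add_le _ _
      have h2 : ‖(r - 1) • P v‖ = (1 - r) * ‖P v‖ := by
        rw [norm_smul, Real.norm_eq_abs, abs_of_nonpos (by linarith)]; ring
      have h3 : (1 - r) * ‖P v‖ ≤ ε := by
        have h4 : 1 - r ≤ ε / (‖P v‖ + 1) := by linarith
        have h5 : (1 - r) * ‖P v‖ ≤ (ε / (‖P v‖ + 1)) * (‖P v‖ + 1) := by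
          apply mul_le_mul h4 (by linarith) (norm_nonneg _) (by positivity)
        rwa [div_mul_cancel₀ ε (ne_of_gt hPv1)] at h5
      calc ‖v - P v‖ ≤ ‖v - r • P v‖ + ‖(r - 1) • P v‖ := h1
        _ ≤ ‖v‖ + ε := by rw [h2]; exact add_le_add (hcontr r hr0 hr1 v) h3
    have hup : ‖(1 : X →L[ℝ] X) - P‖ ≤ 1 := by
      apply opNorm_le_bound _ zero_le_one
      intro v
      rw [one_mul]
      simpa using hle1 v
    obtain ⟨x, hx⟩ : ∃ x : X, P x ≠ x := by
      by_contra h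
      push_neg at h
      exact hne (ContinuousLinearMap.ext fun x => by simp [h x])
    set y : X := x - P x with hydef
    have hy : y ≠ 0 := by
      intro h
      apply hx
      rw [hydef, sub_eq_zero] at h
      exact h.symm
    have hQy : ((1 : X →L[ℝ] X) - P) y = y := by
      simp [hydef, map_sub, hPP]
    have hlow : (1 : ℝ) ≤ ‖(1 : X →L[ℝ] X) - P‖ := by
      have h := ((1 : X →L[ℝ] X) - P).le_opNorm y
      rw [hQy] at h
      have hyn : 0 < ‖y‖ := norm_pos_iff.mpr hy
      nlinarith
    linarith
  · intro hnorm x g hg hgx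
    have hxg : ‖g‖ = ‖x‖ := by
      nlinarith [norm_nonneg g, norm_nonneg x]
    have key : g (x - P x) ≤ ‖x‖ ^ 2 := by
      have h1 : g (x - P x) ≤ ‖g‖ * ‖x - P x‖ :=
        le_trans (le_abs_self _) (g.le_opNorm _)
      have h2 : ‖x - P x‖ ≤ ‖x‖ := by
        have h := ((1 : X →L[ℝ] X) - P).le_opNorm x
        rw [hnorm, one_mul] at h
        simpa using h
      calc g (x - P x) ≤ ‖g‖ * ‖x - P x‖ := h1
        _ ≤ ‖x‖ * ‖x‖ := by rw [hxg]; exact mul_le_mul_of_nonneg_left h2 (norm_nonneg x)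
        _ = ‖x‖ ^ 2 := by ring
    have h : g (P x) = g x - g (x - P x) := by rw [map_sub]; ring
    rw [h, hgx]
    linarith
end

section
/- If ‖I - P‖ ≤ 1 for a bounded linear projection P on a real Banach space X, then P is numerically positive: for every x ∈ X and every x* ∈ X* with ‖x*‖² = ‖x‖² = x*(x), one has x*(Px) ≥ 0. -/
open ContinuousLinearMap

/-- If $\|I - P\| \le 1$ for a projection $P$, then $P$ is numerically positive. -/
theorem stmt2 {X : Type*} [NormedAddCommGroup X] [NormedSpace ℝ X] [CompleteSpace X]
    (P : X →L[ℝ] X) (hproj : P * P = P) (hnorm : ‖(1 : X →L[ℝ] X) - P‖ ≤ 1) :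
    NumericallyPositive P := by
  intro x g hg hx
  have hgx : ‖g‖ = ‖x‖ := by
    nlinarith [norm_nonneg g, norm_nonneg x]
  have key : g (((1 : X →L[ℝ] X) - P) x) ≤ ‖x‖ ^ 2 := by
    calc g (((1 : X →L[ℝ] X) - P) x) ≤ ‖g (((1 : X →L[ℝ] X) - P) x)‖ := le_abs_self _
      _ ≤ ‖g‖ * ‖((1 : X →L[ℝ] X) - P) x‖ := g.le_opNorm _
      _ ≤ ‖g‖ * (‖(1 : X →L[ℝ] X) - P‖ * ‖x‖) := by
          gcongr; exact ((1 : X →L[ℝ] X) - P).le_opNorm x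
      _ ≤ ‖x‖ * (1 * ‖x‖) := by
          rw [hgx]; gcongr
      _ = ‖x‖ ^ 2 := by ring
  have happ : (((1 : X →L[ℝ] X) - P)) x = x - P x := by
    simp [ContinuousLinearMap.sub_apply]
  rw [happ, map_sub, hx] at key
  linarith
end

section
/- The set 𝓕(X) of Flinn elements of a real Banach space X is closed in X. -/
open ContinuousLinearMap

set_option maxHeartbeats 800000
set_option synthInstance.maxHeartbeats 400000

section Aux
variable {X : Type*} [NormedAddCommGroup X] [NormedSpace ℝ X]

lemma flinn_diss (u : X) (f : X →L[ℝ] ℝ)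
    (hpos : ∀ (x : X) (g : X →L[ℝ] ℝ), ‖g‖ ^ 2 = ‖x‖ ^ 2 → g x = ‖x‖ ^ 2 → 0 ≤ f x * g u)
    (x : X) {l : ℝ} (hl : 0 ≤ l) : ‖x‖ ≤ ‖x + (l * f x) • u‖ := by
  rcases eq_or_ne x 0 with rfl | hx
  · simp
  obtain ⟨g, hg1, hgx⟩ := exists_dual_vector ℝ x (norm_ne_zero_iff.mpr hx)
  have hxpos : (0:ℝ) < ‖x‖ := norm_pos_iff.mpr hx
  have h1 : ‖(‖x‖ • g : X →L[ℝ] ℝ)‖ ^ 2 = ‖x‖ ^ 2 := by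
    have : ‖(‖x‖ • g : X →L[ℝ] ℝ)‖ = ‖x‖ * ‖g‖ := by
      rw [norm_smul ‖x‖ g]
      simp
    rw [this, hg1, mul_one]
  have h2 : (‖x‖ • g : X →L[ℝ] ℝ) x = ‖x‖ ^ 2 := by
    simp [hgx]; ring
  have h3 := hpos x (‖x‖ • g) h1 h2
  have h4 : (0:ℝ) ≤ f x * g u := by
    have : (0:ℝ) ≤ ‖x‖ * (f x * g u) := by
      simpa [mul_comm, mul_assoc, mul_left_comm] using h3
    exact nonneg_of_mul_nonneg_right this hxpos
  have h5 : g (x + (l * f x) • u) ≤ ‖x + (l * f x) • u‖ := by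
    calc g (x + (l * f x) • u) ≤ ‖g‖ * ‖x + (l * f x) • u‖ :=
          le_trans (le_abs_self _) (g.le_opNorm _)
      _ = ‖x + (l * f x) • u‖ := by rw [hg1, one_mul]
  have h6 : ‖x‖ ≤ g (x + (l * f x) • u) := by
    have : g (x + (l * f x) • u) = ‖x‖ + l * (f x * g u) := by
      simp [hgx]; ring
    rw [this]
    nlinarith [mul_nonneg hl h4]
  linarith

lemma flinn_bound (u : X) (f : X →L[ℝ] ℝ) (hfu : f u = 1)
    (hpos : ∀ (x : X) (g : X →L[ℝ] ℝ), ‖g‖ ^ 2 = ‖x‖ ^ 2 → g x = ‖x‖ ^ 2 → 0 ≤ f x * g u)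
    (x : X) : ‖u‖ * |f x| ≤ 2 * ‖x‖ := by
  have key : ∀ μ : ℝ, 0 ≤ μ → μ < 1 → μ * (‖u‖ * |f x|) ≤ 2 * ‖x‖ := by
    intro μ hμ0 hμ1
    set y : X := x - (μ * f x) • u with hy
    have hfy : f y = (1 - μ) * f x := by simp [hy, hfu]; ring
    have hl : (0:ℝ) ≤ μ / (1 - μ) := div_nonneg hμ0 (by linarith)
    have hdiss := flinn_diss u f hpos y hl
    have heq : y + ((μ / (1 - μ)) * f y) • u = x := by
      rw [hfy, hy]
      have h1μ : (1 - μ) ≠ 0 := by linarith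
      have : μ / (1 - μ) * ((1 - μ) * f x) = μ * f x := by
        field_simp
      rw [this]; abel
    rw [heq] at hdiss
    have hxy : ‖x - y‖ ≤ 2 * ‖x‖ := by
      calc ‖x - y‖ ≤ ‖x‖ + ‖y‖ := norm_sub_le _ _
        _ ≤ 2 * ‖x‖ := by linarith
    have : ‖x - y‖ = μ * (|f x| * ‖u‖) := by
      rw [hy]
      simp [norm_smul, abs_mul, abs_of_nonneg hμ0, mul_assoc]
    rw [this] at hxy
    linarith [hxy, mul_comm (|f x|) ‖u‖]
  have htend : Filter.Tendsto (fun μ : ℝ => μ * (‖u‖ * |f x|)) (nhdsWithin 1 (Set.Iio 1))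
      (nhds (‖u‖ * |f x|)) := by
    have h : Filter.Tendsto (fun μ : ℝ => μ * (‖u‖ * |f x|)) (nhds 1)
        (nhds (1 * (‖u‖ * |f x|))) := (continuous_id.mul continuous_const).tendsto 1
    rw [one_mul] at h
    exact h.mono_left nhdsWithin_le_nhds
  refine le_of_tendsto htend ?_
  have h0 : ∀ᶠ μ : ℝ in nhdsWithin 1 (Set.Iio 1), 0 < μ :=
    eventually_nhdsWithin_of_eventually_nhds (eventually_gt_nhds (by norm_num))
  have h1 : ∀ᶠ μ : ℝ in nhdsWithin 1 (Set.Iio 1), μ < 1 := eventually_mem_nhdsWithin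
  filter_upwards [h0, h1] with μ hμ0 hμ1
  exact key μ hμ0.le hμ1

end Aux

/-- The set of Flinn elements of a real Banach space is closed. -/
theorem stmt5 {X : Type*} [NormedAddCommGroup X] [NormedSpace ℝ X] [CompleteSpace X] :
    IsClosed {u : X | IsFlinn u} := by
  apply IsSeqClosed.isClosed
  intro v u hv hvu
  simp only [Set.mem_setOf_eq] at hv ⊢
  by_cases hu : u = 0
  · exact Or.inl hu
  right
  have hupos : (0:ℝ) < ‖u‖ := norm_pos_iff.mpr hu
  obtain ⟨N, hN⟩ := Metric.tendsto_atTop.mp hvu (‖u‖ / 2) (by linarith)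
  set w : ℕ → X := fun n => v (n + N) with hw
  have hwlim : Filter.Tendsto w Filter.atTop (nhds u) :=
    hvu.comp (Filter.tendsto_add_atTop_nat N)
  have hwn : ∀ n, ‖u‖ / 2 ≤ ‖w n‖ := by
    intro n
    have h1 := hN (n + N) (Nat.le_add_left N n)
    rw [dist_eq_norm] at h1
    have h2 : |‖w n‖ - ‖u‖| ≤ ‖w n - u‖ := abs_norm_sub_norm_le _ _
    have h3 : ‖u‖ - ‖w n‖ ≤ |‖w n‖ - ‖u‖| := by
      rw [abs_sub_comm]; exact le_abs_self _
    simp only [hw] at h1 ⊢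
    linarith [h2.trans h1.le, h3]
  have hw0 : ∀ n, w n ≠ 0 := by
    intro n h
    have := hwn n
    rw [h, norm_zero] at this
    linarith
  have key : ∀ n, ∃ f : X →L[ℝ] ℝ, f (w n) = 1 ∧
      ∀ (x : X) (g : X →L[ℝ] ℝ), ‖g‖ ^ 2 = ‖x‖ ^ 2 → g x = ‖x‖ ^ 2 → 0 ≤ f x * g (w n) :=
    fun n => (hv (n + N)).resolve_left (hw0 n)
  choose F hF1 hF2 using key
  have hFb : ∀ n, ‖F n‖ ≤ 4 / ‖u‖ := by
    intro n
    apply ContinuousLinearMap.opNorm_le_bound _ (by positivity)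
    intro x
    have hb := flinn_bound (w n) (F n) (hF1 n) (hF2 n) x
    have hwn' := hwn n
    rw [Real.norm_eq_abs]
    rw [div_mul_eq_mul_div, le_div_iff₀ hupos]
    nlinarith [abs_nonneg (F n x), norm_nonneg x]
  set 𝒰 : Ultrafilter ℕ := Ultrafilter.of Filter.atTop with h𝒰def
  have h𝒰 : (𝒰 : Filter ℕ) ≤ Filter.atTop := Ultrafilter.of_le _
  set G : ℕ → WeakDual ℝ X := fun n => StrongDual.toWeakDual (F n) with hG
  have hK : IsCompact (WeakDual.toStrongDual ⁻¹' Metric.closedBall 0 (4 / ‖u‖)) :=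
    WeakDual.isCompact_closedBall (𝕜 := ℝ) (E := X) 0 (4 / ‖u‖)
  have hGK : (𝒰.map G : Filter (WeakDual ℝ X)) ≤
      Filter.principal (WeakDual.toStrongDual ⁻¹' Metric.closedBall 0 (4 / ‖u‖)) := by
    rw [Filter.le_principal_iff]
    apply Filter.mem_map.mpr
    apply Filter.univ_mem'
    intro n
    simp only [Set.mem_preimage, Metric.mem_closedBall, dist_zero_right]
    exact hFb n
  obtain ⟨φ, _, hφ⟩ := hK.ultrafilter_le_nhds (𝒰.map G) hGK
  have hT : Filter.Tendsto G (𝒰 : Filter ℕ) (nhds φ) := hφ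
  set f : X →L[ℝ] ℝ := WeakDual.toStrongDual φ with hf
  have heval : ∀ x : X, Filter.Tendsto (fun n => F n x) (𝒰 : Filter ℕ) (nhds (f x)) := by
    intro x
    exact ((WeakDual.eval_continuous x).tendsto φ).comp hT
  refine ⟨f, ?_, ?_⟩
  · -- f u = 1
    have hnorm0 : Filter.Tendsto (fun n => ‖w n - u‖) Filter.atTop (nhds 0) :=
      tendsto_iff_norm_sub_tendsto_zero.mp hwlim
    have hb : Filter.Tendsto (fun n => F n (w n) - F n u) (𝒰 : Filter ℕ) (nhds 0) := by
      apply squeeze_zero_norm (a := fun n => (4 / ‖u‖) * ‖w n - u‖)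
      · intro n
        have : F n (w n) - F n u = F n (w n - u) := by rw [map_sub]
        rw [this]
        exact ((F n).le_opNorm _).trans
          (mul_le_mul_of_nonneg_right (hFb n) (norm_nonneg _))
      · have : Filter.Tendsto (fun n => (4 / ‖u‖) * ‖w n - u‖) Filter.atTop (nhds ((4 / ‖u‖) * 0)) :=
          tendsto_const_nhds.mul hnorm0
        rw [mul_zero] at this
        exact this.mono_left h𝒰
    have hsum : Filter.Tendsto (fun n => F n u + (F n (w n) - F n u)) (𝒰 : Filter ℕ)
        (nhds (f u + 0)) := (heval u).add hb
    have hsum' : Filter.Tendsto (fun n => F n (w n)) (𝒰 : Filter ℕ) (nhds (f u)) := by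
      rw [add_zero] at hsum
      convert hsum using 2 with n
      ring
    have hconst : Filter.Tendsto (fun _ : ℕ => (1:ℝ)) (𝒰 : Filter ℕ) (nhds 1) :=
      tendsto_const_nhds
    have : f u = 1 := by
      apply tendsto_nhds_unique hsum'
      simpa only [hF1] using hconst
    exact this
  · intro x g hg hgx
    have hA := heval x
    have hB : Filter.Tendsto (fun n => g (w n)) (𝒰 : Filter ℕ) (nhds (g u)) :=
      ((g.continuous.tendsto u).comp hwlim).mono_left h𝒰
    exact ge_of_tendsto (hA.mul hB) (Filter.Eventually.of_forall fun n => hF2 n x g hg hgx)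
end

section
/- If u is a Flinn element of a real Banach space X and Y is a closed subspace of X containing u, then u is a Flinn element of Y. -/
set_option maxHeartbeats 400000
set_option synthInstance.maxHeartbeats 100000


open ContinuousLinearMap

/-- A Flinn element of $X$ lying in a closed subspace $Y$ is a Flinn element of $Y$. -/
theorem stmt6 {X : Type*} [NormedAddCommGroup X] [NormedSpace ℝ X] [CompleteSpace X]
    (Y : Subspace ℝ X) (hY : IsClosed (Y : Set X)) (u : X) (hu : u ∈ Y)
    (hF : IsFlinn u) :
    IsFlinn (⟨u, hu⟩ : Y) := by
  rcases hF with h0 | ⟨f, hfu, hpos⟩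
  · exact Or.inl (Subtype.ext h0)
  · refine Or.inr ⟨f.comp Y.subtypeL, by simpa using hfu, ?_⟩
    intro y g hg hgy
    obtain ⟨G, hGext, hGnorm⟩ := exists_extension_norm_eq Y g
    have h1 : ‖G‖ ^ 2 = ‖(y : X)‖ ^ 2 := by rw [hGnorm]; exact hg
    have h2 : G (y : X) = ‖(y : X)‖ ^ 2 := by rw [hGext y]; exact hgy
    have := hpos (y : X) G h1 h2
    have hGu : G u = g ⟨u, hu⟩ := hGext ⟨u, hu⟩
    simpa [hGu] using this
end

section
/- If u is a nonzero Flinn element of a real Banach space X, witnessed by f ∈ X* with f(u) = 1, then ‖f‖ · ‖u‖ ≤ 2. -/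
open ContinuousLinearMap

set_option synthInstance.maxHeartbeats 1000000
set_option maxHeartbeats 1000000

/-- If $u \ne 0$ is Flinn with witness $f$ (so $f(u)=1$), then $\|f\|\,\|u\| \le 2$. -/
theorem stmt7 {X : Type*} [NormedAddCommGroup X] [NormedSpace ℝ X] [CompleteSpace X]
    (u : X) (hu : u ≠ 0) (f : X →L[ℝ] ℝ) (hf : f u = 1)
    (hpos : ∀ (x : X) (g : X →L[ℝ] ℝ), ‖g‖ ^ 2 = ‖x‖ ^ 2 → g x = ‖x‖ ^ 2 →
      0 ≤ f x * g u) :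
    ‖f‖ * ‖u‖ ≤ 2 := by
  have hu' : (0:ℝ) < ‖u‖ := norm_pos_iff.mpr hu
  have key : ∀ x : X, ‖x - f x • u‖ ≤ ‖x‖ := by
    intro x
    set c := f x with hc
    rcases eq_or_ne c 0 with h0 | h0
    · simp [h0]
    have step : ∀ s : ℝ, 0 < s → s < 1 → ‖x - (s * c) • u‖ ≤ ‖x‖ := by
      intro s hs0 hs1
      set y := x - (s * c) • u with hy
      have hfy : f y = (1 - s) * c := by
        simp only [hy, map_sub, map_smul, smul_eq_mul, hf, ← hc]
        ring
      have hyne : y ≠ 0 := by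
        intro h
        rw [h, map_zero] at hfy
        exact mul_ne_zero (by linarith) h0 hfy.symm
      obtain ⟨g, hg1, hgy⟩ := exists_dual_vector ℝ y (norm_ne_zero_iff.mpr hyne)
      have hyn : (0:ℝ) < ‖y‖ := norm_pos_iff.mpr hyne
      have hgy' : g y = ‖y‖ := hgy
      have hnorm1 : ‖‖y‖⁻¹ • y‖ = 1 := by
        rw [norm_smul, Real.norm_eq_abs, abs_of_pos (inv_pos.mpr hyn)]
        field_simp
      have hpos' := hpos (‖y‖⁻¹ • y) g ?_ ?_
      · have hfval : f (‖y‖⁻¹ • y) = ‖y‖⁻¹ * ((1 - s) * c) := by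
          rw [map_smul, smul_eq_mul, hfy]
        have h1 : 0 ≤ ‖y‖⁻¹ * ((1 - s) * c) * g u := by rw [hfval] at hpos'; exact hpos'
        have hpos2 : (0:ℝ) < ‖y‖⁻¹ * (1 - s) := mul_pos (inv_pos.mpr hyn) (by linarith)
        have h1' : 0 ≤ (‖y‖⁻¹ * (1 - s)) * (c * g u) := by
          rw [show (‖y‖⁻¹ * (1 - s)) * (c * g u) = ‖y‖⁻¹ * ((1 - s) * c) * g u from by ring]
          exact h1
        have hcu : 0 ≤ c * g u := by
          have := div_nonneg h1' hpos2.le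
          rwa [mul_div_cancel_left₀ _ (ne_of_gt hpos2)] at this
        have hgx : g x = ‖y‖ + (s * c) * g u := by
          have h4 : g y = g x - (s * c) * g u := by
            simp [hy, map_sub, map_smul]
          rw [hgy'] at h4; linarith
        have h2 : ‖y‖ ≤ g x := by
          have : 0 ≤ (s * c) * g u := by
            rw [show (s * c) * g u = s * (c * g u) from by ring]
            exact mul_nonneg hs0.le hcu
          linarith
        have h3 : g x ≤ ‖x‖ := by
          calc g x ≤ ‖g x‖ := le_abs_self _
            _ ≤ ‖g‖ * ‖x‖ := g.le_opNorm x
            _ = ‖x‖ := by rw [hg1, one_mul]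
        linarith
      · rw [hg1, hnorm1]
      · rw [map_smul, smul_eq_mul, hgy', hnorm1, inv_mul_cancel₀ (ne_of_gt hyn)]
        norm_num
    apply le_of_forall_pos_le_add
    intro eps heps
    set d := min (1/2) (eps / (|c| * ‖u‖ + 1)) with hd
    have hd0 : 0 < d := lt_min (by norm_num) (div_pos heps (by positivity))
    have hd1 : d ≤ 1/2 := min_le_left _ _
    have hs := step (1 - d) (by linarith) (by linarith)
    have hdiff : ‖x - c • u‖ ≤ ‖x - ((1 - d) * c) • u‖ + d * (|c| * ‖u‖) := by
      have heq : x - c • u = (x - ((1 - d) * c) • u) + (-(d * c)) • u := by module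
      rw [heq]
      refine (norm_add_le _ _).trans ?_
      have hn : ‖(-(d * c)) • u‖ = d * (|c| * ‖u‖) := by
        have := norm_smul (-(d * c)) u
        rw [this, Real.norm_eq_abs, abs_neg, abs_mul, abs_of_pos hd0]; ring
      rw [hn]
    have hde : d * (|c| * ‖u‖) ≤ eps := by
      have h2 : d ≤ eps / (|c| * ‖u‖ + 1) := min_le_right _ _
      have h3 : d * (|c| * ‖u‖ + 1) ≤ eps := by
        rw [← le_div_iff₀ (by positivity)]; exact h2
      nlinarith [abs_nonneg c, norm_nonneg u, hd0]
    linarith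
  have bound : ∀ x : X, |f x| * ‖u‖ ≤ 2 * ‖x‖ := by
    intro x
    have h1 : ‖f x • u‖ ≤ ‖x‖ + ‖x - f x • u‖ := by
      calc ‖f x • u‖ = ‖x - (x - f x • u)‖ := by rw [sub_sub_cancel]
        _ ≤ ‖x‖ + ‖x - f x • u‖ := norm_sub_le _ _
    have h2 := key x
    rw [norm_smul, Real.norm_eq_abs] at h1
    linarith
  have hfle : ‖f‖ ≤ 2 / ‖u‖ := by
    apply ContinuousLinearMap.opNorm_le_bound _ (by positivity)
    intro x
    rw [Real.norm_eq_abs, div_mul_eq_mul_div, le_div_iff₀ hu']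
    have := bound x
    linarith
  calc ‖f‖ * ‖u‖ ≤ (2 / ‖u‖) * ‖u‖ := mul_le_mul_of_nonneg_right hfle (norm_nonneg u)
    _ = 2 := by field_simp
end

section
/- If a real Banach space X contains a 1-complemented hyperplane, then X contains a nonzero Flinn element. -/
open ContinuousLinearMap

/-- A real Banach space with a 1-complemented hyperplane contains a nonzero Flinn
element. -/
theorem stmt10 {X : Type*} [NormedAddCommGroup X] [NormedSpace ℝ X] [CompleteSpace X]
    (hyp : ∃ (f : X →L[ℝ] ℝ) (P : X →L[ℝ] X), f ≠ 0 ∧ P * P = P ∧ ‖P‖ = 1 ∧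
      (∀ x : X, f (P x) = 0) ∧ (∀ x : X, f x = 0 → P x = x)) :
    ∃ u : X, u ≠ 0 ∧ IsFlinn u := by
  obtain ⟨f, P, hf, _, hP1, hfP, hker⟩ := hyp
  obtain ⟨y, hy⟩ := ContinuousLinearMap.exists_ne_zero hf
  set x₀ : X := (f y)⁻¹ • y with hx₀
  have hfx₀ : f x₀ = 1 := by simp [hx₀, inv_mul_cancel₀ hy]
  set u : X := x₀ - P x₀ with hu
  have hfu : f u = 1 := by simp [hu, hfx₀, hfP]
  have hune : u ≠ 0 := fun h => by simp [h] at hfu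
  have key : ∀ x : X, x - P x = f x • u := by
    intro x
    have h0 : f (x - f x • x₀) = 0 := by simp [hfx₀]
    have := hker _ h0
    rw [map_sub, map_smul] at this
    have : P x = x - f x • x₀ + f x • P x₀ := sub_eq_iff_eq_add.mp this
    rw [this, hu, smul_sub]; abel
  refine ⟨u, hune, Or.inr ⟨f, hfu, ?_⟩⟩
  intro x g hg hgx
  have hnorm : ‖g‖ = ‖x‖ := by
    have h := congrArg Real.sqrt hg
    rwa [Real.sqrt_sq (norm_nonneg g), Real.sqrt_sq (norm_nonneg x)] at h
  have h1 : g (P x) ≤ ‖x‖ ^ 2 := by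
    calc g (P x) ≤ ‖g‖ * ‖P x‖ := le_trans (le_abs_self _)
          (by simpa using g.le_opNorm (P x))
      _ ≤ ‖g‖ * (‖P‖ * ‖x‖) := by
          exact mul_le_mul_of_nonneg_left (P.le_opNorm x) (norm_nonneg g)
      _ = ‖x‖ ^ 2 := by rw [hnorm, hP1]; ring
  have h2 : f x * g u = g x - g (P x) := by
    have := congrArg g (key x)
    rw [map_sub, map_smul] at this
    rw [this, smul_eq_mul]
  rw [h2, hgx]; linarith
end

section
/- Let X be a real Banach space with almost transitive isometry group. If X contains a nonzero Flinn element, then every element of X is a Flinn element. -/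
open ContinuousLinearMap

open Filter Topology

set_option maxHeartbeats 1000000

lemma flinn_map_aux {X : Type*} [NormedAddCommGroup X] [NormedSpace ℝ X]
    (f : X →L[ℝ] ℝ) (u : X)
    (hpos : ∀ (x : X) (g : X →L[ℝ] ℝ), ‖g‖ ^ 2 = ‖x‖ ^ 2 → g x = ‖x‖ ^ 2 → 0 ≤ f x * g u)
    (T : X ≃ₗᵢ[ℝ] X) :
    ∀ (x : X) (g : X →L[ℝ] ℝ), ‖g‖ ^ 2 = ‖x‖ ^ 2 → g x = ‖x‖ ^ 2 →
      0 ≤ (f.comp T.symm.toLinearIsometry.toContinuousLinearMap) x * g (T u) := by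
  intro x g hg hgx
  set x' : X := T.symm x with hx'
  set g' : X →L[ℝ] ℝ := g.comp T.toLinearIsometry.toContinuousLinearMap with hg'
  have hgn : ‖g'‖ = ‖g‖ := g.opNorm_comp_linearIsometryEquiv T
  have hxn : ‖x'‖ = ‖x‖ := T.symm.norm_map x
  have h1 : ‖g'‖ ^ 2 = ‖x'‖ ^ 2 := by rw [hgn, hxn]; exact hg
  have h2 : g' x' = ‖x'‖ ^ 2 := by
    have : g' x' = g x := by simp [hg', hx']
    rw [this, hxn]; exact hgx
  have := hpos x' g' h1 h2
  have he2 : g' u = g (T u) := by simp [hg']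
  rw [he2] at this
  exact this

/-- In an almost transitive real Banach space containing a nonzero Flinn element,
every element is a Flinn element. -/
theorem stmt11 {X : Type*} [NormedAddCommGroup X] [NormedSpace ℝ X] [CompleteSpace X]
    (htrans : AlmostTransitive X) (hex : ∃ u : X, u ≠ 0 ∧ IsFlinn u) :
    ∀ u : X, IsFlinn u := by
  obtain ⟨u₀, hu₀ne, hu₀⟩ := hex
  have hu₀' : u₀ = 0 ∨ ∃ f : X →L[ℝ] ℝ, f u₀ = 1 ∧
      ∀ (x : X) (g : X →L[ℝ] ℝ), ‖g‖ ^ 2 = ‖x‖ ^ 2 → g x = ‖x‖ ^ 2 → 0 ≤ f x * g u₀ := hu₀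
  rcases hu₀' with h0 | ⟨f₀, hf₀1, hf₀pos⟩
  · exact absurd h0 hu₀ne
  have hn0 : ‖u₀‖ ≠ 0 := norm_ne_zero_iff.mpr hu₀ne
  set v₀ : X := ‖u₀‖⁻¹ • u₀ with hv₀def
  set F₀ : X →L[ℝ] ℝ := ‖u₀‖ • f₀ with hF₀def
  have hv₀norm : ‖v₀‖ = 1 := by
    rw [hv₀def, norm_smul, norm_inv, norm_norm, inv_mul_cancel₀ hn0]
  have hF₀1 : F₀ v₀ = 1 := by
    have : F₀ v₀ = ‖u₀‖ * (‖u₀‖⁻¹ * f₀ u₀) := by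
      simp only [hF₀def, hv₀def, ContinuousLinearMap.smul_apply, map_smul, smul_eq_mul]
      ring
    rw [this, hf₀1, mul_one, mul_inv_cancel₀ hn0]
  have hF₀pos : ∀ (x : X) (g : X →L[ℝ] ℝ), ‖g‖ ^ 2 = ‖x‖ ^ 2 → g x = ‖x‖ ^ 2 →
      0 ≤ F₀ x * g v₀ := by
    intro x g hg hgx
    have key : F₀ x * g v₀ = (‖u₀‖ * ‖u₀‖⁻¹) * (f₀ x * g u₀) := by
      simp only [hF₀def, hv₀def, ContinuousLinearMap.smul_apply, map_smul, smul_eq_mul]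
      ring
    rw [key, mul_inv_cancel₀ hn0, one_mul]
    exact hf₀pos x g hg hgx
  intro u
  rcases eq_or_ne u 0 with rfl | hune
  · exact Or.inl rfl
  have hnu : ‖u‖ ≠ 0 := norm_ne_zero_iff.mpr hune
  set v : X := ‖u‖⁻¹ • u with hvdef
  have hvnorm : ‖v‖ = 1 := by
    rw [hvdef, norm_smul, norm_inv, norm_norm, inv_mul_cancel₀ hnu]
  have hmem := htrans v₀ (by simpa [mem_sphere_zero_iff_norm] using hv₀norm)
    v (by simpa [mem_sphere_zero_iff_norm] using hvnorm)
  obtain ⟨s, hs, hslim⟩ := mem_closure_iff_seq_limit.mp hmem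
  choose T hT using hs
  set fseq : ℕ → (X →L[ℝ] ℝ) :=
    fun n => F₀.comp (T n).symm.toLinearIsometry.toContinuousLinearMap with hfseqdef
  have hfnorm : ∀ n, ‖fseq n‖ = ‖F₀‖ := fun n =>
    F₀.opNorm_comp_linearIsometryEquiv (T n).symm
  have hfs1 : ∀ n, fseq n (s n) = 1 := by
    intro n
    have : fseq n (s n) = F₀ ((T n).symm (s n)) := rfl
    rw [this, ← hT n, LinearIsometryEquiv.symm_apply_apply, hF₀1]
  have hfspos : ∀ n, ∀ (x : X) (g : X →L[ℝ] ℝ), ‖g‖ ^ 2 = ‖x‖ ^ 2 → g x = ‖x‖ ^ 2 →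
      0 ≤ fseq n x * g (s n) := by
    intro n x g hg hgx
    have := flinn_map_aux F₀ v₀ hF₀pos (T n) x g hg hgx
    rwa [hT n] at this
  -- Banach–Alaoglu: extract a weak-* cluster point of `fseq`
  set φ : ℕ → WeakDual ℝ X := fun n => StrongDual.toWeakDual (fseq n) with hφdef
  have hK : IsCompact (WeakDual.toStrongDual ⁻¹'
      Metric.closedBall (0 : StrongDual ℝ X) ‖F₀‖) :=
    WeakDual.isCompact_closedBall (𝕜 := ℝ) (E := X) 0 ‖F₀‖
  have hle : Filter.map φ Filter.atTop ≤ Filter.principal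
      (WeakDual.toStrongDual ⁻¹' Metric.closedBall (0 : StrongDual ℝ X) ‖F₀‖) := by
    rw [Filter.le_principal_iff]
    refine Filter.mem_map.mpr (Filter.Eventually.of_forall fun n => ?_)
    simp only [Set.mem_preimage, Metric.mem_closedBall, dist_zero_right]
    exact le_of_eq (hfnorm n)
  obtain ⟨f, -, hcl⟩ := hK.exists_clusterPt hle
  have hmc : MapClusterPt f Filter.atTop φ := hcl
  have heval : ∀ y : X, MapClusterPt (f y) Filter.atTop (fun n => fseq n y) := by
    intro y
    exact hmc.continuousAt_comp (WeakDual.eval_continuous (𝕜 := ℝ) y).continuousAt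
  -- f v = 1
  have htendv : Filter.Tendsto (fun n => fseq n v) Filter.atTop (𝓝 1) := by
    rw [tendsto_iff_norm_sub_tendsto_zero]
    have hbnd : ∀ n, ‖fseq n v - 1‖ ≤ ‖F₀‖ * ‖v - s n‖ := by
      intro n
      have : fseq n v - 1 = fseq n (v - s n) := by rw [map_sub, hfs1 n]
      rw [this]
      calc ‖fseq n (v - s n)‖ ≤ ‖fseq n‖ * ‖v - s n‖ := (fseq n).le_opNorm _
        _ = ‖F₀‖ * ‖v - s n‖ := by rw [hfnorm]
    have h0 : Filter.Tendsto (fun n => ‖F₀‖ * ‖v - s n‖) Filter.atTop (𝓝 0) := by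
      have hsn : Filter.Tendsto (fun n => ‖v - s n‖) Filter.atTop (𝓝 0) := by
        have := tendsto_iff_norm_sub_tendsto_zero.mp hslim
        simpa [norm_sub_rev] using this
      simpa using hsn.const_mul ‖F₀‖
    exact squeeze_zero (fun n => norm_nonneg _) hbnd h0
  have hfv1 : f v = 1 := by
    have h1 : ClusterPt (f v) (Filter.map (fun n => fseq n v) Filter.atTop) :=
      (heval v).clusterPt
    have h2 : Filter.map (fun n => fseq n v) Filter.atTop ≤ 𝓝 1 := htendv
    exact eq_of_nhds_neBot (h1.mono h2)
  -- positivity of f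
  have hfpos : ∀ (x : X) (g : X →L[ℝ] ℝ), ‖g‖ ^ 2 = ‖x‖ ^ 2 → g x = ‖x‖ ^ 2 →
      0 ≤ f x * g v := by
    intro x g hg hgx
    have hgs : Filter.Tendsto (fun n => g (s n)) Filter.atTop (𝓝 (g v)) :=
      (g.continuous.tendsto v).comp hslim
    have hclx : MapClusterPt (f x * g v) Filter.atTop (fun n => fseq n x * g v) :=
      (heval x).continuousAt_comp (continuous_mul_right (g v)).continuousAt
    have hb : ∀ n, -(‖F₀‖ * ‖x‖ * |g v - g (s n)|) ≤ fseq n x * g v := by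
      intro n
      have h1 : 0 ≤ fseq n x * g (s n) := hfspos n x g hg hgx
      have h2 : fseq n x * g v = fseq n x * g (s n) + fseq n x * (g v - g (s n)) := by ring
      have h3 : |fseq n x * (g v - g (s n))| ≤ ‖F₀‖ * ‖x‖ * |g v - g (s n)| := by
        rw [abs_mul]
        refine mul_le_mul_of_nonneg_right ?_ (abs_nonneg _)
        calc |fseq n x| = ‖fseq n x‖ := (Real.norm_eq_abs _).symm
          _ ≤ ‖fseq n‖ * ‖x‖ := (fseq n).le_opNorm x
          _ = ‖F₀‖ * ‖x‖ := by rw [hfnorm]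
      have h4 := neg_abs_le (fseq n x * (g v - g (s n)))
      linarith
    have hc0 : Filter.Tendsto (fun n => ‖F₀‖ * ‖x‖ * |g v - g (s n)|)
        Filter.atTop (𝓝 0) := by
      have h1 : Filter.Tendsto (fun n => |g v - g (s n)|) Filter.atTop (𝓝 0) := by
        have := (tendsto_const_nhds (x := g v)).sub hgs
        simpa using this.abs
      simpa using h1.const_mul (‖F₀‖ * ‖x‖)
    have hkey : ∀ ε : ℝ, 0 < ε → -ε ≤ f x * g v := by
      intro ε hε
      have hev : ∀ᶠ n in Filter.atTop, -(ε / 2) ≤ fseq n x * g v := by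
        filter_upwards [hc0.eventually (gt_mem_nhds (by linarith : (0:ℝ) < ε / 2))] with n hn
        have := hb n
        linarith
      have hfreq := (mapClusterPt_iff_frequently.mp hclx) (Metric.ball (f x * g v) (ε / 2))
        (Metric.ball_mem_nhds _ (by linarith))
      obtain ⟨n, hn1, hn2⟩ := (hfreq.and_eventually hev).exists
      have hd : |fseq n x * g v - (f x * g v)| < ε / 2 := by
        simpa [Real.dist_eq] using Metric.mem_ball.mp hn1
      have := abs_lt.mp hd
      linarith [this.1, this.2]
    by_contra hcon
    push_neg at hcon
    have := hkey (-(f x * g v) / 2) (by linarith)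
    linarith
  -- conclude for u = ‖u‖ • v
  have huv : u = ‖u‖ • v := by
    rw [hvdef, smul_smul, mul_inv_cancel₀ hnu, one_smul]
  refine Or.inr ⟨‖u‖⁻¹ • WeakDual.toStrongDual f, ?_, ?_⟩
  · have hfu : f u = ‖u‖ := by
      calc f u = f (‖u‖ • v) := by rw [← huv]
        _ = ‖u‖ * f v := by rw [map_smul, smul_eq_mul]
        _ = ‖u‖ := by rw [hfv1, mul_one]
    show ‖u‖⁻¹ * f u = 1
    rw [hfu, inv_mul_cancel₀ hnu]
  · intro x g hg hgx
    have hgu : g u = ‖u‖ * g v := by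
      calc g u = g (‖u‖ • v) := by rw [← huv]
        _ = ‖u‖ * g v := by rw [map_smul, smul_eq_mul]
    show 0 ≤ ‖u‖⁻¹ * f x * g u
    rw [hgu]
    have key : ‖u‖⁻¹ * f x * (‖u‖ * g v) = (‖u‖⁻¹ * ‖u‖) * (f x * g v) := by ring
    rw [key, inv_mul_cancel₀ hnu, one_mul]
    exact hfpos x g hg hgx
end

section
/- In a real Banach space X, if S(x) = x - 2e*(x)e is an isometric reflection (with e*(e)=1), then e is a Flinn element of X witnessed by 2e*; in particular X contains a nonzero Flinn element whenever it admits an isometric reflection. -/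
open ContinuousLinearMap

/-- If $S(x) = x - 2e^*(x)e$ is an isometric reflection with $e^*(e) = 1$, then $e$
is a Flinn element (witnessed by $2e^*$, up to normalization); in particular $X$
contains a nonzero Flinn element. -/
theorem stmt14 {X : Type*} [NormedAddCommGroup X] [NormedSpace ℝ X] [CompleteSpace X]
    (e : X) (he : e ≠ 0) (estar : X →L[ℝ] ℝ) (hee : estar e = 1)
    (hS : ∀ x : X, ‖x - (2 * estar x) • e‖ = ‖x‖) :
    (∀ (x : X) (g : X →L[ℝ] ℝ), ‖g‖ ^ 2 = ‖x‖ ^ 2 → g x = ‖x‖ ^ 2 →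
      0 ≤ (2 * estar x) * g e) ∧
    IsFlinn e ∧ ∃ u : X, u ≠ 0 ∧ IsFlinn u := by
  have key : ∀ (x : X) (g : X →L[ℝ] ℝ), ‖g‖ ^ 2 = ‖x‖ ^ 2 → g x = ‖x‖ ^ 2 →
      0 ≤ (2 * estar x) * g e := by
    intro x g hg hx
    have hgn : ‖g‖ = ‖x‖ := by
      nlinarith [norm_nonneg g, norm_nonneg x]
    have h1 : g (x - (2 * estar x) • e) ≤ ‖g‖ * ‖x - (2 * estar x) • e‖ :=
      le_trans (le_abs_self _) (g.le_opNorm _)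
    rw [hS x, hgn, map_sub, g.map_smul, smul_eq_mul, hx] at h1
    nlinarith [sq_nonneg ‖x‖]
  exact ⟨key, Or.inr ⟨estar, hee, fun x g hg hx => by nlinarith [key x g hg hx]⟩,
    ⟨e, he, Or.inr ⟨estar, hee, fun x g hg hx => by nlinarith [key x g hg hx]⟩⟩⟩
end

section
/- If X is a real Banach space of dimension 3 in which every element is a Flinn element, then every 2-dimensional subspace of the dual space X* is the range of a norm-one projection on X*. -/
open ContinuousLinearMap

/-- Numerical positivity of the rank one map `f ⊗ u` implies
`‖x + f x • u‖ ≥ ‖x‖`. -/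
lemma flinn_aux_A {X : Type*} [NormedAddCommGroup X] [NormedSpace ℝ X]
    (u : X) (f : X →L[ℝ] ℝ)
    (hpos : ∀ (x : X) (g : X →L[ℝ] ℝ), ‖g‖ ^ 2 = ‖x‖ ^ 2 → g x = ‖x‖ ^ 2 → 0 ≤ f x * g u)
    (x : X) : ‖x‖ ≤ ‖x + f x • u‖ := by
  rcases eq_or_ne x 0 with rfl | hx
  · simp
  obtain ⟨g, hg1, hgx⟩ := exists_dual_vector ℝ x (norm_ne_zero_iff.mpr hx)
  set g' : X →L[ℝ] ℝ := ‖x‖ • g with hg'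
  have hgx0 : g x = ‖x‖ := by exact_mod_cast hgx
  have hng' : ‖g'‖ = ‖x‖ := by
    have h := norm_smul ‖x‖ g
    rw [hg', h, hg1, mul_one, norm_norm]
  have hgx' : g' x = ‖x‖ ^ 2 := by
    rw [hg']
    simp only [ContinuousLinearMap.smul_apply, smul_eq_mul, hgx0, sq]
  have hp := hpos x g' (by rw [hng']) hgx'
  have h1 : g' (x + f x • u) = ‖x‖ ^ 2 + f x * g' u := by
    rw [map_add, map_smul, hgx', smul_eq_mul]
  have h2 : g' (x + f x • u) ≤ ‖g'‖ * ‖x + f x • u‖ := le_trans (le_abs_self _)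
    (g'.le_opNorm _)
  have hxpos : (0:ℝ) < ‖x‖ := norm_pos_iff.mpr hx
  have : ‖x‖ ^ 2 ≤ ‖x‖ * ‖x + f x • u‖ := by
    calc ‖x‖ ^ 2 ≤ ‖x‖ ^ 2 + f x * g' u := by linarith
    _ = g' (x + f x • u) := h1.symm
    _ ≤ ‖g'‖ * ‖x + f x • u‖ := h2
    _ = ‖x‖ * ‖x + f x • u‖ := by rw [hng']
  nlinarith

/-- Iterating the inverse `(I + f⊗u)⁻¹`: the contraction estimate. -/
lemma flinn_aux_B {X : Type*} [NormedAddCommGroup X] [NormedSpace ℝ X]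
    (u : X) (f : X →L[ℝ] ℝ) (hfu : f u = 1)
    (hpos : ∀ (x : X) (g : X →L[ℝ] ℝ), ‖g‖ ^ 2 = ‖x‖ ^ 2 → g x = ‖x‖ ^ 2 → 0 ≤ f x * g u)
    (x : X) : ‖x - f x • u‖ ≤ ‖x‖ := by
  have claim : ∀ (n : ℕ) (x : X), ‖x - (1 - (1/2:ℝ)^n) • (f x • u)‖ ≤ ‖x‖ := by
    intro n
    induction n with
    | zero => intro x; simp
    | succ n ih =>
      intro x
      have hy := ih (x - (1/2 : ℝ) • (f x • u))
      have hfy : f (x - (1/2 : ℝ) • (f x • u)) = (1/2) * f x := by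
        simp [hfu, smul_eq_mul]; ring
      rw [hfy] at hy
      have heq : (x - (1/2:ℝ) • (f x • u)) - (1 - (1/2:ℝ)^n) • ((1/2 * f x) • u)
          = x - (1 - (1/2:ℝ)^(n+1)) • (f x • u) := by
        module
      rw [heq] at hy
      have hAy : ‖x - (1/2:ℝ) • (f x • u)‖ ≤ ‖x‖ := by
        have h2 := flinn_aux_A u f hpos (x - (1/2:ℝ) • (f x • u))
        have h3 : (x - (1/2:ℝ) • (f x • u)) + f (x - (1/2:ℝ) • (f x • u)) • u = x := by
          rw [hfy]
          module
        rwa [h3] at h2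
      exact hy.trans hAy
  refine le_of_forall_pos_le_add fun ε hε => ?_
  have hv1 : (0:ℝ) < ‖f x • u‖ + 1 := by positivity
  obtain ⟨n, hn⟩ := exists_pow_lt_of_lt_one (div_pos hε hv1) (by norm_num : (1/2:ℝ) < 1)
  have h1 := claim n x
  have hsplit : x - f x • u = (x - (1 - (1/2:ℝ)^n) • (f x • u)) - ((1/2:ℝ)^n) • (f x • u) := by
    module
  rw [hsplit]
  have h2 : ‖((1/2:ℝ)^n) • (f x • u)‖ = (1/2:ℝ)^n * ‖f x • u‖ := by
    rw [norm_smul, Real.norm_eq_abs, abs_of_nonneg (by positivity)]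
  calc ‖(x - (1 - (1/2:ℝ)^n) • (f x • u)) - ((1/2:ℝ)^n) • (f x • u)‖
      ≤ ‖x - (1 - (1/2:ℝ)^n) • (f x • u)‖ + ‖((1/2:ℝ)^n) • (f x • u)‖ := norm_sub_le _ _
    _ ≤ ‖x‖ + ε := by
        rw [h2]
        have hn' : (1/2:ℝ)^n * (‖f x • u‖ + 1) < ε := (lt_div_iff₀ hv1).mp hn
        have : (1/2:ℝ)^n * ‖f x • u‖ ≤ ε := by
          nlinarith [pow_nonneg (by norm_num : (0:ℝ) ≤ 1/2) n]
        linarith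


lemma aux_exists_u {X : Type*} [NormedAddCommGroup X] [NormedSpace ℝ X]
    [FiniteDimensional ℝ X] (hfin : Module.finrank ℝ X = 3)
    (F : Subspace ℝ (X →L[ℝ] ℝ)) (hfinF : Module.finrank ℝ F = 2) :
    ∃ u : X, u ≠ 0 ∧ ∀ g : X →L[ℝ] ℝ, g ∈ F ↔ g u = 0 := by
  have hfinD : Module.finrank ℝ (X →L[ℝ] ℝ) = 3 := by
    rw [← LinearEquiv.finrank_eq (LinearMap.toContinuousLinearMap : (X →ₗ[ℝ] ℝ) ≃ₗ[ℝ] _),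
      Module.finrank_linearMap_self, hfin]
  let φ : X →ₗ[ℝ] (F →ₗ[ℝ] ℝ) :=
    { toFun := fun x =>
        { toFun := fun g => (g : X →L[ℝ] ℝ) x
          map_add' := fun a b => rfl
          map_smul' := fun c a => rfl }
      map_add' := fun a b => by ext g; simp
      map_smul' := fun c a => by ext g; simp }
  have hker : LinearMap.ker φ ≠ ⊥ := by
    intro hbot
    have h1 := LinearMap.finrank_range_add_finrank_ker φ
    rw [hbot, finrank_bot, add_zero] at h1
    have hle : Module.finrank ℝ (LinearMap.range φ) ≤ Module.finrank ℝ (F →ₗ[ℝ] ℝ) :=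
      Submodule.finrank_le _
    haveI : Module.Free ℝ F := Module.Free.of_divisionRing ℝ F
    haveI : Module.Finite ℝ F := Module.finite_of_finrank_eq_succ hfinF
    rw [show Module.finrank ℝ (F →ₗ[ℝ] ℝ) = Module.finrank ℝ F from
      Module.finrank_linearMap_self ℝ ℝ F, hfinF, h1, hfin] at hle
    omega
  obtain ⟨u, humem, hu0⟩ := Submodule.exists_mem_ne_zero_of_ne_bot hker
  have hann : ∀ g ∈ F, g u = 0 := by
    intro g hg
    have h0 : φ u = 0 := humem
    have h1 := congrArg (fun ψ => ψ ⟨g, hg⟩) h0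
    simpa [φ] using h1
  -- evaluation at u, as a linear functional on the dual
  let ev : (X →L[ℝ] ℝ) →ₗ[ℝ] ℝ :=
    { toFun := fun g => g u
      map_add' := fun a b => rfl
      map_smul' := fun c a => rfl }
  have hevsurj : Function.Surjective ev := by
    obtain ⟨g, hg1, hgu⟩ := exists_dual_vector ℝ u (norm_ne_zero_iff.mpr hu0)
    have hgu' : g u = ‖u‖ := by exact_mod_cast hgu
    intro c
    refine ⟨(c / ‖u‖) • g, ?_⟩
    have hne : ‖u‖ ≠ 0 := norm_ne_zero_iff.mpr hu0
    simp only [ev, LinearMap.coe_mk, AddHom.coe_mk, ContinuousLinearMap.smul_apply,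
      smul_eq_mul, hgu']
    field_simp
  have hFK : F = LinearMap.ker ev := by
    have hle : F ≤ LinearMap.ker ev := by
      intro g hg
      simpa [ev, LinearMap.mem_ker] using hann g hg
    refine Submodule.eq_of_le_of_finrank_le hle ?_
    have h1 := LinearMap.finrank_range_add_finrank_ker ev
    have hrt : LinearMap.range ev = ⊤ := LinearMap.range_eq_top.mpr hevsurj
    rw [hrt, finrank_top, Module.finrank_self, hfinD] at h1
    omega
  refine ⟨u, hu0, fun g => ?_⟩
  rw [hFK]
  exact Iff.rfl


lemma aux_Q {X : Type*} [NormedAddCommGroup X] [NormedSpace ℝ X]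
    (u : X) (f : X →L[ℝ] ℝ) (hfu : f u = 1)
    (hcontr : ∀ x : X, ‖x - f x • u‖ ≤ ‖x‖)
    (F : Subspace ℝ (X →L[ℝ] ℝ)) (hmem : ∀ g : X →L[ℝ] ℝ, g ∈ F ↔ g u = 0)
    (g0 : X →L[ℝ] ℝ) (hg0F : g0 ∈ F) (hg0 : g0 ≠ 0) :
    ∃ Q : (X →L[ℝ] ℝ) →L[ℝ] (X →L[ℝ] ℝ), Q * Q = Q ∧ ‖Q‖ = 1 ∧
      (∀ g : X →L[ℝ] ℝ, Q g ∈ F) ∧ (∀ g ∈ F, Q g = g) := by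
  set Q : (X →L[ℝ] ℝ) →L[ℝ] (X →L[ℝ] ℝ) :=
    ContinuousLinearMap.id ℝ (X →L[ℝ] ℝ) - (ContinuousLinearMap.apply ℝ ℝ u).smulRight f
    with hQ
  have hQapp : ∀ g : X →L[ℝ] ℝ, Q g = g - g u • f := fun g => rfl
  have hQu : ∀ g : X →L[ℝ] ℝ, (Q g) u = 0 := by
    intro g
    rw [hQapp]
    simp [hfu, smul_eq_mul]
  have hQmem : ∀ g : X →L[ℝ] ℝ, Q g ∈ F := fun g => (hmem _).mpr (hQu g)
  have hQfix : ∀ g ∈ F, Q g = g := by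
    intro g hg
    rw [hQapp, (hmem g).mp hg]
    simp
  have hproj : Q * Q = Q := by
    ext g x
    simp only [ContinuousLinearMap.mul_apply]
    rw [hQapp (Q g), hQu g]
    simp
  have hle1 : ‖Q‖ ≤ 1 := by
    refine ContinuousLinearMap.opNorm_le_bound _ zero_le_one ?_
    intro g
    rw [one_mul]
    refine ContinuousLinearMap.opNorm_le_bound _ (norm_nonneg g) ?_
    intro x
    have h1 : (Q g) x = g (x - f x • u) := by
      rw [hQapp]
      simp [smul_eq_mul]
      ring
    rw [h1]
    calc ‖g (x - f x • u)‖ ≤ ‖g‖ * ‖x - f x • u‖ := g.le_opNorm _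
      _ ≤ ‖g‖ * ‖x‖ := mul_le_mul_of_nonneg_left (hcontr x) (norm_nonneg g)
  have hge1 : 1 ≤ ‖Q‖ := by
    have h1 : Q g0 = g0 := hQfix g0 hg0F
    have h2 : ‖g0‖ ≤ ‖Q‖ * ‖g0‖ := by
      have := Q.le_opNorm g0
      rwa [h1] at this
    have h3 : (0:ℝ) < ‖g0‖ := norm_pos_iff.mpr hg0
    exact le_of_mul_le_mul_right (by linarith) h3
  exact ⟨Q, hproj, le_antisymm hle1 hge1, hQmem, hQfix⟩

/-- If $\dim X = 3$ and every element of $X$ is Flinn, then every 2-dimensional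
subspace of $X^*$ is the range of a norm-one projection on $X^*$. -/
theorem stmt17 {X : Type*} [NormedAddCommGroup X] [NormedSpace ℝ X] [CompleteSpace X]
    (hdim : Module.rank ℝ X = 3) (hF : ∀ u : X, IsFlinn u) :
    ∀ F : Subspace ℝ (X →L[ℝ] ℝ), Module.rank ℝ F = 2 →
      ∃ Q : (X →L[ℝ] ℝ) →L[ℝ] (X →L[ℝ] ℝ), Q * Q = Q ∧ ‖Q‖ = 1 ∧
        (∀ g : X →L[ℝ] ℝ, Q g ∈ F) ∧ (∀ g ∈ F, Q g = g) := by
  intro F hF2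
  haveI : FiniteDimensional ℝ X :=
    Module.finite_of_rank_eq_nat (n := 3) (by exact_mod_cast hdim)
  have hfin : Module.finrank ℝ X = 3 := Module.finrank_eq_of_rank_eq (by exact_mod_cast hdim)
  have hfinF : Module.finrank ℝ F = 2 := Module.finrank_eq_of_rank_eq (by exact_mod_cast hF2)
  obtain ⟨u, hu0, hmem⟩ := aux_exists_u hfin F hfinF
  obtain ⟨f, hfu, hpos⟩ := (hF u).resolve_left hu0
  have hFne : F ≠ ⊥ := by
    intro h
    rw [h, finrank_bot] at hfinF
    omega
  obtain ⟨g0, hg0F, hg0⟩ := Submodule.exists_mem_ne_zero_of_ne_bot hFne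
  exact aux_Q u f hfu (flinn_aux_B u f hfu hpos) F hmem g0 hg0F hg0
end
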